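/- arXiv:1409.5978 — 2 statements merged into one kernel-verified Lean document; each statement's English description precedes it below -/
import Mathlib

section
/- Let p be an odd prime, let g ≥ 1, and let e_1, …, e_{2g} be vectors spanning V = F_p^{2g} such that there is no partition of the set E = {e_1, …, e_{2g}} into two nonempty subsets E_1 and E_2 with ι(e, f) = 0 for all e ∈ E_1 and f ∈ E_2. Then the subgroup of Sp(2g, F_p) generated by the transvections T_{e_1}, …, T_{e_{2g}} equals the entire group Sp(2g, F_p). -/
/-!
STATEMENT 0: Let `p` be an odd prime, `g ≥ 1`, and let `e 1, …, e 2g` be vectors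
spanning `V = (F_p)^{2g}` such that there is no partition of the set
`E = {e 1, …, e 2g}` into two nonempty subsets `E₁`, `E₂` with `ι (x, y) = 0` for all
`x ∈ E₁`, `y ∈ E₂`.  Then the subgroup of `Sp(2g, F_p)` generated by the transvections
`T_{e 1}, …, T_{e 2g}` equals the entire group `Sp(2g, F_p)`.
-/

/-- The standard symplectic form on `(F_p)^{2g}`, modelled as `(Fin g ⊕ Fin g) → ZMod p`. -/
def stdSymplForm (g p : ℕ) (x y : (Fin g ⊕ Fin g) → ZMod p) : ZMod p :=
  ∑ i : Fin g, (x (Sum.inl i) * y (Sum.inr i) - x (Sum.inr i) * y (Sum.inl i))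

lemma stdSymplForm_add_left (g p : ℕ) (x y β : (Fin g ⊕ Fin g) → ZMod p) :
    stdSymplForm g p (x + y) β = stdSymplForm g p x β + stdSymplForm g p y β := by
  simp only [stdSymplForm, Pi.add_apply]
  rw [← Finset.sum_add_distrib]
  exact Finset.sum_congr rfl fun i _ => by ring

lemma stdSymplForm_smul_left (g p : ℕ) (c : ZMod p) (x β : (Fin g ⊕ Fin g) → ZMod p) :
    stdSymplForm g p (c • x) β = c * stdSymplForm g p x β := by
  simp only [stdSymplForm, Pi.smul_apply, smul_eq_mul]
  rw [Finset.mul_sum]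
  exact Finset.sum_congr rfl fun i _ => by ring

lemma stdSymplForm_self (g p : ℕ) (β : (Fin g ⊕ Fin g) → ZMod p) :
    stdSymplForm g p β β = 0 :=
  Finset.sum_eq_zero fun i _ => by ring

/-- The symplectic form, as a linear map in its first variable. -/
def stdSymplFormL (g p : ℕ) (β : (Fin g ⊕ Fin g) → ZMod p) :
    ((Fin g ⊕ Fin g) → ZMod p) →ₗ[ZMod p] ZMod p where
  toFun x := stdSymplForm g p x β
  map_add' x y := stdSymplForm_add_left g p x y β
  map_smul' c x := stdSymplForm_smul_left g p c x β

/-- The transvection with the vector `β` : the linear map `x ↦ x + ι(x, β) • β`. -/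
def transvection (g p : ℕ) (β : (Fin g ⊕ Fin g) → ZMod p) :
    ((Fin g ⊕ Fin g) → ZMod p) →ₗ[ZMod p] ((Fin g ⊕ Fin g) → ZMod p) :=
  LinearMap.id + (stdSymplFormL g p β).smulRight β

lemma transvection_apply (g p : ℕ) (β x : (Fin g ⊕ Fin g) → ZMod p) :
    transvection g p β x = x + stdSymplForm g p x β • β := rfl

/-- The transvection with the vector `β`, as a linear automorphism of `(F_p)^{2g}`. -/
def transvectionEquiv (g p : ℕ) (β : (Fin g ⊕ Fin g) → ZMod p) :
    ((Fin g ⊕ Fin g) → ZMod p) ≃ₗ[ZMod p] ((Fin g ⊕ Fin g) → ZMod p) :=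
  { transvection g p β with
    invFun := fun x => x - stdSymplForm g p x β • β
    left_inv := fun x => by
      show (x + stdSymplForm g p x β • β) -
        stdSymplForm g p (x + stdSymplForm g p x β • β) β • β = x
      rw [stdSymplForm_add_left, stdSymplForm_smul_left, stdSymplForm_self, mul_zero, add_zero]
      abel
    right_inv := fun x => by
      show (x - stdSymplForm g p x β • β) +
        stdSymplForm g p (x - stdSymplForm g p x β • β) β • β = x
      rw [sub_eq_add_neg, stdSymplForm_add_left, ← neg_one_smul (ZMod p)
        (stdSymplForm g p x β • β), smul_smul, stdSymplForm_smul_left, stdSymplForm_self]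
      simp }

section Aux
variable (g p : ℕ)

local notation "F" => ZMod p
local notation "V" => ((Fin g ⊕ Fin g) → ZMod p)
local notation "ι" => stdSymplForm g p

lemma sform_anti (x y : V) : ι x y = - ι y x := by
  simp only [stdSymplForm, ← Finset.sum_neg_distrib]
  exact Finset.sum_congr rfl fun i _ => by ring

lemma sform_add_right (x y z : V) : ι x (y + z) = ι x y + ι x z := by
  rw [sform_anti, stdSymplForm_add_left, sform_anti g p y, sform_anti g p z]; ring

lemma sform_smul_right (c : F) (x y : V) : ι x (c • y) = c * ι x y := by
  rw [sform_anti, stdSymplForm_smul_left, sform_anti g p y]; ring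

lemma sform_zero_right (x : V) : ι x 0 = 0 := by
  have := sform_smul_right g p 0 x 0
  simpa using this

lemma sform_zero_left (x : V) : ι 0 x = 0 := by
  rw [sform_anti, sform_zero_right]; ring

lemma sform_neg_right (x y : V) : ι x (-y) = - ι x y := by
  have := sform_smul_right g p (-1) x y
  simpa using this

lemma sform_sub_right (x y z : V) : ι x (y - z) = ι x y - ι x z := by
  rw [sub_eq_add_neg, sform_add_right, sform_neg_right]; ring

lemma sform_sub_left (x y z : V) : ι (x - y) z = ι x z - ι y z := by
  rw [sform_anti, sform_sub_right, sform_anti g p z x, sform_anti g p z y]; ring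

/-- The `t`-transvection with vector `v` : `x ↦ x + t·ι(x,v)·v`. -/
def Tv (v : V) (t : F) : V ≃ₗ[F] V where
  toFun x := x + (t * ι x v) • v
  invFun x := x - (t * ι x v) • v
  map_add' x y := by
    simp only [stdSymplForm_add_left]
    module
  map_smul' c x := by
    simp only [stdSymplForm_smul_left, RingHom.id_apply]
    module
  left_inv x := by
    simp only [stdSymplForm_add_left, stdSymplForm_smul_left, stdSymplForm_self]
    module
  right_inv x := by
    simp only [sform_sub_left, stdSymplForm_smul_left, stdSymplForm_self]
    module

lemma Tv_apply (v : V) (t : F) (x : V) : Tv g p v t x = x + (t * ι x v) • v := rfl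

lemma Tv_zero_t (v : V) : Tv g p v 0 = 1 := by
  refine LinearEquiv.ext fun x => ?_
  simp [Tv_apply]

lemma Tv_zero_vec (t : F) : Tv g p 0 t = 1 := by
  refine LinearEquiv.ext fun x => ?_
  simp [Tv_apply, sform_zero_right]

lemma Tv_mul (v : V) (s t : F) : Tv g p v s * Tv g p v t = Tv g p v (s + t) := by
  refine LinearEquiv.ext fun x => ?_
  show Tv g p v s (Tv g p v t x) = _
  rw [Tv_apply, Tv_apply, Tv_apply, stdSymplForm_add_left, stdSymplForm_smul_left,
    stdSymplForm_self]
  module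

lemma Tv_pow (v : V) (t : F) (n : ℕ) : Tv g p v t ^ n = Tv g p v (n * t) := by
  induction n with
  | zero => simp [Tv_zero_t]
  | succ n ih =>
    rw [pow_succ, ih, Tv_mul]
    congr 1
    push_cast
    ring

lemma transvectionEquiv_eq_Tv (v : V) : transvectionEquiv g p v = Tv g p v 1 := by
  refine LinearEquiv.ext fun x => ?_
  show x + stdSymplForm g p x v • v = _
  rw [Tv_apply, one_mul]

lemma Tv_smul_vec (c : F) (v : V) (t : F) : Tv g p (c • v) t = Tv g p v (t * c * c) := by
  refine LinearEquiv.ext fun x => ?_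
  rw [Tv_apply, Tv_apply, sform_smul_right]
  module

/-- The symplectic group as a subgroup of the linear automorphisms. -/
def sp : Subgroup (V ≃ₗ[F] V) where
  carrier := {f | ∀ x y, ι (f x) (f y) = ι x y}
  one_mem' := fun x y => rfl
  mul_mem' := by
    intro a b ha hb x y
    show ι (a (b x)) (a (b y)) = _
    rw [ha, hb]
  inv_mem' := by
    intro a ha x y
    have := ha (a⁻¹ x) (a⁻¹ y)
    rw [show a (a⁻¹ x) = x from a.apply_symm_apply x,
      show a (a⁻¹ y) = y from a.apply_symm_apply y] at this
    exact this.symm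

lemma Tv_mem_sp (v : V) (t : F) : Tv g p v t ∈ sp g p := by
  intro x y
  simp only [Tv_apply, stdSymplForm_add_left, stdSymplForm_smul_left,
    sform_add_right, sform_smul_right, stdSymplForm_self, sform_anti g p v y]
  ring

lemma sp_conj_Tv (f : V ≃ₗ[F] V) (hf : f ∈ sp g p) (v : V) (t : F) :
    f * Tv g p v t * f⁻¹ = Tv g p (f v) t := by
  refine LinearEquiv.ext fun x => ?_
  show f (Tv g p v t (f⁻¹ x)) = _
  rw [Tv_apply, Tv_apply]
  have h1 : ι (f⁻¹ x) v = ι x (f v) := by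
    have := hf (f⁻¹ x) v
    rw [show f (f⁻¹ x) = x from f.apply_symm_apply x] at this
    exact this.symm
  rw [map_add, map_smul, h1, show f (f⁻¹ x) = x from f.apply_symm_apply x]

end Aux
section Aux2
variable (g p : ℕ) [Fact p.Prime] (e : Fin (2*g) → ((Fin g ⊕ Fin g) → ZMod p))

local notation "F" => ZMod p
local notation "V" => ((Fin g ⊕ Fin g) → ZMod p)
local notation "ι" => stdSymplForm g p

/-- The subgroup generated by the given transvections. -/
def Gg : Subgroup (V ≃ₗ[F] V) :=
  Subgroup.closure (Set.range fun i => transvectionEquiv g p (e i))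

lemma Gg_le_sp : Gg g p e ≤ sp g p := by
  rw [Gg, Subgroup.closure_le]
  rintro f ⟨i, rfl⟩
  show transvectionEquiv g p (e i) ∈ sp g p
  rw [transvectionEquiv_eq_Tv]
  exact Tv_mem_sp g p (e i) 1

/-- The set of vectors all of whose transvections lie in `Gg`. -/
def Wset : Set V := {v | ∀ t : F, Tv g p v t ∈ Gg g p e}

lemma W_zero : 0 ∈ Wset g p e := by
  intro t
  rw [Tv_zero_vec]
  exact one_mem _

lemma natCast_val_eq (t : F) : ((t.val : ℕ) : F) = t := by
  haveI : NeZero p := ⟨(Fact.out : p.Prime).ne_zero⟩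
  exact ZMod.natCast_rightInverse t

lemma W_e (i : Fin (2*g)) : e i ∈ Wset g p e := by
  intro t
  have h1 : transvectionEquiv g p (e i) ∈ Gg g p e :=
    Subgroup.subset_closure ⟨i, rfl⟩
  have h2 : Tv g p (e i) t = transvectionEquiv g p (e i) ^ (t.val) := by
    rw [transvectionEquiv_eq_Tv, Tv_pow, mul_one, natCast_val_eq]
  rw [h2]
  exact pow_mem h1 _

lemma W_smul {v : V} (hv : v ∈ Wset g p e) (c : F) : c • v ∈ Wset g p e := by
  intro t
  rw [Tv_smul_vec]
  exact hv _

lemma W_G {f : V ≃ₗ[F] V} (hf : f ∈ Gg g p e) {v : V} (hv : v ∈ Wset g p e) :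
    f v ∈ Wset g p e := by
  intro t
  rw [← sp_conj_Tv g p f (Gg_le_sp g p e hf) v t]
  exact mul_mem (mul_mem hf (hv t)) (inv_mem hf)

lemma W_plane {u v : V} (hu : u ∈ Wset g p e) (hv : v ∈ Wset g p e)
    (huv : ι u v ≠ 0) (a b : F) : a • u + b • v ∈ Wset g p e := by
  rcases eq_or_ne b 0 with rfl | hb
  · rw [zero_smul, add_zero]
    exact W_smul g p e hu a
  · have hvu : ι v u ≠ 0 := by
      rw [sform_anti]
      simpa using huv
    have key : ∀ s : F, v + s • u ∈ Wset g p e := by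
      intro s
      have h1 : Tv g p u (s * (ι v u)⁻¹) v = v + s • u := by
        rw [Tv_apply]
        congr 1
        rw [mul_assoc, inv_mul_cancel₀ hvu, mul_one]
      rw [← h1]
      exact W_G g p e (hu _) hv
    have h2 : a • u + b • v = b • (v + (a * b⁻¹) • u) := by
      rw [smul_add, smul_smul, mul_comm b, mul_assoc, inv_mul_cancel₀ hb, mul_one]
      abel
    rw [h2]
    exact W_smul g p e (key _) b

lemma W_good {u v w : V} (hu : u ∈ Wset g p e) (hv : v ∈ Wset g p e)
    (hw : w ∈ Wset g p e) (huv : ι u v = 0) (huw : ι u w ≠ 0) (hvw : ι v w ≠ 0)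
    (hsum : ι u w + ι v w ≠ 0) : u + v ∈ Wset g p e := by
  have ha : u + w ∈ Wset g p e := by
    have := W_plane g p e hu hw huw 1 1
    simpa using this
  have hav : ι (u + w) v ≠ 0 := by
    rw [stdSymplForm_add_left, huv, zero_add, sform_anti]
    simpa using hvw
  have hz : (u + w) + v ∈ Wset g p e := by
    have := W_plane g p e ha hv hav 1 1
    simpa using this
  set c := ι u w + ι v w with hc
  have key : Tv g p w (-c⁻¹) ((u + w) + v) = u + v := by
    rw [Tv_apply]
    have h1 : ι ((u + w) + v) w = c := by
      rw [stdSymplForm_add_left, stdSymplForm_add_left, stdSymplForm_self, hc]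
      ring
    rw [h1]
    have h2 : -c⁻¹ * c = -1 := by
      rw [neg_mul, inv_mul_cancel₀ hsum]
    rw [h2]
    module
  rw [← key]
  exact W_G g p e (hw _) hz

lemma magic_identity (u v w : V) (d : F) (hd : d ≠ 0)
    (huv : ι u v = 0) (hvu : ι v u = 0) (huw : ι u w = d) (hwu : ι w u = -d)
    (hvw : ι v w = -d) (hwv : ι w v = d) :
    Tv g p w (2 * (d⁻¹ * d⁻¹)) * Tv g p v 1 * Tv g p w (2 * (d⁻¹ * d⁻¹)) * Tv g p u 1 *
      (Tv g p w (2 * (d⁻¹ * d⁻¹)) * Tv g p v 1 * Tv g p w (2 * (d⁻¹ * d⁻¹)) * Tv g p u 1)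
      = Tv g p (u + v) 2 := by
  refine LinearEquiv.ext fun x => ?_
  show Tv g p w _ (Tv g p v 1 (Tv g p w _ (Tv g p u 1
    (Tv g p w _ (Tv g p v 1 (Tv g p w _ (Tv g p u 1 x))))))) = _
  obtain ⟨X, hX⟩ : ∃ X, ι x u = X := ⟨_, rfl⟩
  obtain ⟨Y, hY⟩ : ∃ Y, ι x v = Y := ⟨_, rfl⟩
  obtain ⟨Z, hZ⟩ : ∃ Z, ι x w = Z := ⟨_, rfl⟩
  have e1 : Tv g p u 1 x = x + X • u := by
    rw [Tv_apply, one_mul, hX]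
  have e2 : Tv g p w (2 * (d⁻¹ * d⁻¹)) (x + X • u)
      = x + X • u + (2*Z*d⁻¹*d⁻¹ + 2*X*d⁻¹) • w := by
    rw [Tv_apply]
    simp only [stdSymplForm_add_left, stdSymplForm_smul_left, stdSymplForm_self,
      hX, hY, hZ, huv, hvu, huw, hwu, hvw, hwv]
    match_scalars <;> (try field_simp) <;> (try ring) <;> (try ring_nf)
  have e3 : Tv g p v 1 (x + X • u + (2*Z*d⁻¹*d⁻¹ + 2*X*d⁻¹) • w)
      = x + X • u + (2*Z*d⁻¹ + Y + 2*X) • v + (2*Z*d⁻¹*d⁻¹ + 2*X*d⁻¹) • w := by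
    rw [Tv_apply]
    simp only [stdSymplForm_add_left, stdSymplForm_smul_left, stdSymplForm_self,
      hX, hY, hZ, huv, hvu, huw, hwu, hvw, hwv]
    match_scalars <;> (try field_simp) <;> (try ring) <;> (try ring_nf)
  have e4 : Tv g p w (2 * (d⁻¹ * d⁻¹))
      (x + X • u + (2*Z*d⁻¹ + Y + 2*X) • v + (2*Z*d⁻¹*d⁻¹ + 2*X*d⁻¹) • w)
      = x + X • u + (2*Z*d⁻¹ + Y + 2*X) • v + (-(2*Y*d⁻¹)) • w := by
    rw [Tv_apply]
    simp only [stdSymplForm_add_left, stdSymplForm_smul_left, stdSymplForm_self,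
      hX, hY, hZ, huv, hvu, huw, hwu, hvw, hwv]
    match_scalars <;> (try field_simp) <;> (try ring) <;> (try ring_nf)
  have e5 : Tv g p u 1 (x + X • u + (2*Z*d⁻¹ + Y + 2*X) • v + (-(2*Y*d⁻¹)) • w)
      = x + (2*X + 2*Y) • u + (2*Z*d⁻¹ + Y + 2*X) • v + (-(2*Y*d⁻¹)) • w := by
    rw [Tv_apply]
    simp only [stdSymplForm_add_left, stdSymplForm_smul_left, stdSymplForm_self,
      hX, hY, hZ, huv, hvu, huw, hwu, hvw, hwv]
    match_scalars <;> (try field_simp) <;> (try ring) <;> (try ring_nf)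
  have e6 : Tv g p w (2 * (d⁻¹ * d⁻¹))
      (x + (2*X + 2*Y) • u + (2*Z*d⁻¹ + Y + 2*X) • v + (-(2*Y*d⁻¹)) • w)
      = x + (2*X + 2*Y) • u + (2*Z*d⁻¹ + Y + 2*X) • v + (-(2*Z*d⁻¹*d⁻¹)) • w := by
    rw [Tv_apply]
    simp only [stdSymplForm_add_left, stdSymplForm_smul_left, stdSymplForm_self,
      hX, hY, hZ, huv, hvu, huw, hwu, hvw, hwv]
    match_scalars <;> (try field_simp) <;> (try ring) <;> (try ring_nf)
  have e7 : Tv g p v 1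
      (x + (2*X + 2*Y) • u + (2*Z*d⁻¹ + Y + 2*X) • v + (-(2*Z*d⁻¹*d⁻¹)) • w)
      = x + (2*X + 2*Y) • u + (2*X + 2*Y) • v + (-(2*Z*d⁻¹*d⁻¹)) • w := by
    rw [Tv_apply]
    simp only [stdSymplForm_add_left, stdSymplForm_smul_left, stdSymplForm_self,
      hX, hY, hZ, huv, hvu, huw, hwu, hvw, hwv]
    match_scalars <;> (try field_simp) <;> (try ring) <;> (try ring_nf)
  have e8 : Tv g p w (2 * (d⁻¹ * d⁻¹))
      (x + (2*X + 2*Y) • u + (2*X + 2*Y) • v + (-(2*Z*d⁻¹*d⁻¹)) • w)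
      = x + (2*X + 2*Y) • u + (2*X + 2*Y) • v := by
    rw [Tv_apply]
    simp only [stdSymplForm_add_left, stdSymplForm_smul_left, stdSymplForm_self,
      hX, hY, hZ, huv, hvu, huw, hwu, hvw, hwv]
    match_scalars <;> (try field_simp) <;> (try ring) <;> (try ring_nf)
  rw [e1, e2, e3, e4, e5, e6, e7, e8, Tv_apply, sform_add_right, hX, hY]
  match_scalars <;> ring

lemma symplTwoNeZero (hodd : Odd p) : (2 : F) ≠ 0 := by
  have h2 : ((2 : ℕ) : F) = 0 ↔ p ∣ 2 := ZMod.natCast_eq_zero_iff 2 p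
  intro h
  have hdvd : p ∣ 2 := by
    rw [← h2]
    exact_mod_cast h
  have hp2 : p = 2 := ((Nat.prime_dvd_prime_iff_eq Fact.out Nat.prime_two).mp hdvd)
  rcases hodd with ⟨k, hk⟩
  omega

lemma W_magic {u v w : V} (hu : u ∈ Wset g p e) (hv : v ∈ Wset g p e)
    (hw : w ∈ Wset g p e) (huv : ι u v = 0) (huw : ι u w ≠ 0)
    (hvw : ι v w = - ι u w) (hodd : Odd p) : u + v ∈ Wset g p e := by
  have hvu : ι v u = 0 := by rw [sform_anti, huv, neg_zero]
  have hwu : ι w u = - ι u w := by rw [sform_anti]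
  have hwv : ι w v = ι u w := by rw [sform_anti, hvw, neg_neg]
  have two_ne : (2 : F) ≠ 0 := symplTwoNeZero p hodd
  have key := magic_identity g p u v w (ι u w) huw huv hvu rfl hwu hvw hwv
  have hG2 : Tv g p (u + v) 2 ∈ Gg g p e := by
    rw [← key]
    exact mul_mem (mul_mem (mul_mem (mul_mem (hw _) (hv 1)) (hw _)) (hu 1))
      (mul_mem (mul_mem (mul_mem (hw _) (hv 1)) (hw _)) (hu 1))
  intro t
  have h1 : Tv g p (u + v) 2 ^ ((2⁻¹ * t : F).val) = Tv g p (u + v) t := by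
    rw [Tv_pow, natCast_val_eq]
    congr 1
    field_simp
  rw [← h1]
  exact pow_mem hG2 _

lemma W_diamond {u v w : V} (hu : u ∈ Wset g p e) (hv : v ∈ Wset g p e)
    (hw : w ∈ Wset g p e) (huw : ι u w ≠ 0) (hvw : ι v w ≠ 0) (hodd : Odd p) :
    u + v ∈ Wset g p e := by
  rcases eq_or_ne (ι u v) 0 with huv | huv
  · rcases eq_or_ne (ι u w + ι v w) 0 with hsum | hsum
    · exact W_magic g p e hu hv hw huv huw (by linear_combination hsum) hodd
    · exact W_good g p e hu hv hw huv huw hvw hsum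
  · have := W_plane g p e hu hv huv 1 1
    simpa using this

end Aux2
section Aux3
variable (g p : ℕ) [Fact p.Prime] (e : Fin (2*g) → ((Fin g ⊕ Fin g) → ZMod p))

local notation "F" => ZMod p
local notation "V" => ((Fin g ⊕ Fin g) → ZMod p)
local notation "ι" => stdSymplForm g p

lemma sform_single_inr (x : V) (i : Fin g) :
    ι x (Pi.single (Sum.inr i) 1) = x (Sum.inl i) := by
  rw [stdSymplForm, Finset.sum_eq_single i]
  · simp
  · intro j _ hj
    simp [Pi.single_apply, hj]
  · intro h
    exact absurd (Finset.mem_univ i) h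

lemma sform_single_inl (x : V) (i : Fin g) :
    ι x (Pi.single (Sum.inl i) 1) = - x (Sum.inr i) := by
  rw [stdSymplForm, Finset.sum_eq_single i]
  · simp
  · intro j _ hj
    simp [Pi.single_apply, hj]
  · intro h
    exact absurd (Finset.mem_univ i) h

lemma eq_zero_of_sform_e_zero (hspan : Submodule.span F (Set.range e) = ⊤)
    {x : V} (h : ∀ i, ι x (e i) = 0) : x = 0 := by
  have hall : ∀ y : V, ι x y = 0 := by
    intro y
    have hy : y ∈ Submodule.span F (Set.range e) := by
      rw [hspan]; trivial
    induction hy using Submodule.span_induction with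
    | mem z hz => obtain ⟨i, rfl⟩ := hz; exact h i
    | zero => exact sform_zero_right g p x
    | add a b _ _ ha hb => rw [sform_add_right, ha, hb, add_zero]
    | smul c a _ ha => rw [sform_smul_right, ha, mul_zero]
  funext k
  cases k with
  | inl i =>
    have := hall (Pi.single (Sum.inr i) 1)
    rwa [sform_single_inr] at this
  | inr i =>
    have := hall (Pi.single (Sum.inl i) 1)
    rw [sform_single_inl, neg_eq_zero] at this
    exact this

lemma exists_e_pair (hspan : Submodule.span F (Set.range e) = ⊤)
    {x : V} (hx : x ≠ 0) : ∃ i, ι x (e i) ≠ 0 := by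
  by_contra h
  push_neg at h
  exact hx (eq_zero_of_sform_e_zero g p e hspan h)

/-- A chain of length `n` in the set `range e` with consecutive non-orthogonal entries. -/
def EChain (n : ℕ) (x y : V) : Prop :=
  ∃ f : ℕ → V, f 0 = x ∧ f n = y ∧ (∀ k ≤ n, f k ∈ Set.range e) ∧
    ∀ k < n, ι (f k) (f (k+1)) ≠ 0

lemma connected
    (hpart : ¬ ∃ E₁ E₂ : Set ((Fin g ⊕ Fin g) → ZMod p),
      E₁.Nonempty ∧ E₂.Nonempty ∧ E₁ ∪ E₂ = Set.range e ∧ E₁ ∩ E₂ = ∅ ∧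
      ∀ x ∈ E₁, ∀ y ∈ E₂, stdSymplForm g p x y = 0)
    {x y : V} (hx : x ∈ Set.range e) (hy : y ∈ Set.range e) :
    ∃ n, EChain g p e n x y := by
  by_contra hne
  apply hpart
  refine ⟨{z | z ∈ Set.range e ∧ ∃ n, EChain g p e n x z},
    {z | z ∈ Set.range e ∧ ¬ ∃ n, EChain g p e n x z}, ?_, ?_, ?_, ?_, ?_⟩
  · exact ⟨x, hx, 0, fun _ => x, rfl, rfl, fun k _ => hx, fun k hk => absurd hk (by omega)⟩
  · exact ⟨y, hy, hne⟩
  · ext z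
    simp only [Set.mem_union, Set.mem_setOf_eq]
    constructor
    · rintro (⟨h, _⟩ | ⟨h, _⟩) <;> exact h
    · intro h
      by_cases hc : ∃ n, EChain g p e n x z
      · exact Or.inl ⟨h, hc⟩
      · exact Or.inr ⟨h, hc⟩
  · ext z
    simp only [Set.mem_inter_iff, Set.mem_setOf_eq, Set.mem_empty_iff_false, iff_false]
    rintro ⟨⟨_, hc⟩, ⟨_, hnc⟩⟩
    exact hnc hc
  · rintro a ⟨ha, n, f, hf0, hfn, hmem, hedge⟩ b ⟨hb, hnb⟩
    by_contra hab
    apply hnb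
    refine ⟨n + 1, fun k => if k = n + 1 then b else f k, ?_, ?_, ?_, ?_⟩
    · simp [hf0]
    · simp
    · intro k hk
      by_cases hkn : k = n + 1
      · simp [hkn, hb]
      · simp only [hkn, if_false]
        exact hmem k (by omega)
    · intro k hk
      by_cases hkn : k = n
      · subst hkn
        simp only [if_pos rfl, if_neg (by omega : ¬ k = k + 1), hfn]
        exact hab
      · simp only [if_neg (by omega : ¬ k = n + 1), if_neg (by omega : ¬ k + 1 = n + 1)]
        exact hedge k (by omega)

lemma W_mem_of_range {x : V} (hx : x ∈ Set.range e) : x ∈ Wset g p e := by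
  obtain ⟨i, rfl⟩ := hx
  exact W_e g p e i

lemma W_combo_chain (hodd : Odd p) :
    ∀ n x y, EChain g p e n x y → ∀ a b : F, a • x + b • y ∈ Wset g p e := by
  intro n
  induction n using Nat.strong_induction_on with
  | _ n ih =>
    intro x y hch a b
    obtain ⟨f, hf0, hfn, hmem, hedge⟩ := hch
    have hxW : x ∈ Wset g p e := W_mem_of_range g p e (hf0 ▸ hmem 0 (by omega))
    have hyW : y ∈ Wset g p e := W_mem_of_range g p e (hfn ▸ hmem n (by omega))
    rcases eq_or_ne a 0 with rfl | ha
    · rw [zero_smul, zero_add]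
      exact W_smul g p e hyW b
    rcases eq_or_ne b 0 with rfl | hb
    · rw [zero_smul, add_zero]
      exact W_smul g p e hxW a
    match n with
    | 0 =>
      have hxy : y = x := by rw [← hf0, ← hfn]
      subst hxy
      have : a • y + b • y = (a + b) • y := by module
      rw [this]
      exact W_smul g p e hyW _
    | 1 =>
      have hxy : ι x y ≠ 0 := by
        have := hedge 0 (by omega)
        rwa [hf0, show f 1 = y from hfn] at this
      exact W_plane g p e hxW hyW hxy a b
    | 2 =>
      -- common neighbour f 1
      have h1W : f 1 ∈ Wset g p e := W_mem_of_range g p e (hmem 1 (by omega))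
      have hx1 : ι x (f 1) ≠ 0 := by
        have := hedge 0 (by omega); rwa [hf0] at this
      have h1y : ι (f 1) y ≠ 0 := by
        have := hedge 1 (by omega); rwa [show f 2 = y from hfn] at this
      have hy1 : ι y (f 1) ≠ 0 := by
        rw [sform_anti]; simpa using h1y
      have hu : ι (a • x) (f 1) ≠ 0 := by
        rw [stdSymplForm_smul_left]; exact mul_ne_zero ha hx1
      have hv : ι (b • y) (f 1) ≠ 0 := by
        rw [stdSymplForm_smul_left]; exact mul_ne_zero hb hy1
      exact W_diamond g p e (W_smul g p e hxW a) (W_smul g p e hyW b) h1W hu hv hodd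
    | (m + 3) =>
      by_cases hsh : ∃ k, k < m + 3 ∧ EChain g p e k x y
      · obtain ⟨k, hk, hchk⟩ := hsh
        exact ih k hk x y hchk a b
      push_neg at hsh
      have hx1 : ι x (f 1) ≠ 0 := by
        have := hedge 0 (by omega); rwa [hf0] at this
      have hn1y : ι (f (m+2)) y ≠ 0 := by
        have := hedge (m+2) (by omega); rwa [show f (m+3) = y from hfn] at this
      -- no shorter chain facts
      have hxn1 : ι x (f (m+2)) = 0 := by
        by_contra hne
        refine hsh 2 (by omega) ⟨fun k => if k = 0 then x else if k = 1 then f (m+2) else y,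
          by simp, by simp, ?_, ?_⟩
        · intro k hk
          interval_cases k
          · simpa [← hf0] using hmem 0 (by omega)
          · simpa using hmem (m+2) (by omega)
          · simpa [← hfn] using hmem (m+3) (by omega)
        · intro k hk
          interval_cases k
          · simpa using hne
          · simpa using hn1y
      have hy1 : ι y (f 1) = 0 := by
        by_contra hne
        refine hsh 2 (by omega) ⟨fun k => if k = 0 then x else if k = 1 then f 1 else y,
          by simp, by simp, ?_, ?_⟩
        · intro k hk
          interval_cases k
          · simpa [← hf0] using hmem 0 (by omega)
          · simpa using hmem 1 (by omega)
          · simpa [← hfn] using hmem (m+3) (by omega)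
        · intro k hk
          interval_cases k
          · simpa using hx1
          · have : ι (f 1) y ≠ 0 := by
              rw [sform_anti]
              simpa using hne
            simpa using this
      -- middle chain from f 1 to f (m+2) of length m+1
      have hmid : EChain g p e (m+1) (f 1) (f (m+2)) := by
        refine ⟨fun k => f (k+1), rfl, rfl, ?_, ?_⟩
        · intro k hk
          exact hmem (k+1) (by omega)
        · intro k hk
          exact hedge (k+1) (by omega)
      have hwW : (1 : F) • f 1 + (1 : F) • f (m+2) ∈ Wset g p e :=
        ih (m+1) (by omega) _ _ hmid 1 1
      rw [one_smul, one_smul] at hwW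
      set w := f 1 + f (m+2) with hw
      have huw : ι (a • x) w ≠ 0 := by
        rw [stdSymplForm_smul_left, hw, sform_add_right, hxn1, add_zero]
        exact mul_ne_zero ha hx1
      have hvw : ι (b • y) w ≠ 0 := by
        rw [stdSymplForm_smul_left, hw, sform_add_right, hy1, zero_add]
        have : ι y (f (m+2)) ≠ 0 := by
          rw [sform_anti]; simpa using hn1y
        exact mul_ne_zero hb this
      exact W_diamond g p e (W_smul g p e hxW a) (W_smul g p e hyW b) hwW huw hvw hodd

lemma W_univ (hodd : Odd p) (hspan : Submodule.span F (Set.range e) = ⊤)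
    (hpart : ¬ ∃ E₁ E₂ : Set ((Fin g ⊕ Fin g) → ZMod p),
      E₁.Nonempty ∧ E₂.Nonempty ∧ E₁ ∪ E₂ = Set.range e ∧ E₁ ∩ E₂ = ∅ ∧
      ∀ x ∈ E₁, ∀ y ∈ E₂, stdSymplForm g p x y = 0)
    (x : V) : x ∈ Wset g p e := by
  have hx : x ∈ Submodule.span F (Set.range e) := by rw [hspan]; trivial
  induction hx using Submodule.span_induction with
  | mem z hz => exact W_mem_of_range g p e hz
  | zero => exact W_zero g p e
  | add u v _ _ huW hvW =>
    rcases eq_or_ne u 0 with rfl | hu0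
    · rwa [zero_add]
    rcases eq_or_ne v 0 with rfl | hv0
    · rwa [add_zero]
    obtain ⟨i, hi⟩ := exists_e_pair g p e hspan hu0
    obtain ⟨j, hj⟩ := exists_e_pair g p e hspan hv0
    by_cases h1 : ι v (e i) ≠ 0
    · exact W_diamond g p e huW hvW (W_e g p e i) hi h1 hodd
    by_cases h2 : ι u (e j) ≠ 0
    · exact W_diamond g p e huW hvW (W_e g p e j) h2 hj hodd
    push_neg at h1 h2
    obtain ⟨n, hch⟩ := connected g p e hpart ⟨i, rfl⟩ ⟨j, rfl⟩
    have hwW : (1 : F) • e i + (1 : F) • e j ∈ Wset g p e :=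
      W_combo_chain g p e hodd n _ _ hch 1 1
    rw [one_smul, one_smul] at hwW
    have huw : ι u (e i + e j) ≠ 0 := by
      rw [sform_add_right, h2, add_zero]; exact hi
    have hvw : ι v (e i + e j) ≠ 0 := by
      rw [sform_add_right, h1, zero_add]; exact hj
    exact W_diamond g p e huW hvW hwW huw hvw hodd
  | smul c u _ huW => exact W_smul g p e huW c

lemma Tv_mem_Gg (hodd : Odd p) (hspan : Submodule.span F (Set.range e) = ⊤)
    (hpart : ¬ ∃ E₁ E₂ : Set ((Fin g ⊕ Fin g) → ZMod p),
      E₁.Nonempty ∧ E₂.Nonempty ∧ E₁ ∪ E₂ = Set.range e ∧ E₁ ∩ E₂ = ∅ ∧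
      ∀ x ∈ E₁, ∀ y ∈ E₂, stdSymplForm g p x y = 0)
    (v : V) (t : F) : Tv g p v t ∈ Gg g p e :=
  W_univ g p e hodd hspan hpart v t

end Aux3
section Aux4
variable (g p : ℕ) [Fact p.Prime] (e : Fin (2*g) → ((Fin g ⊕ Fin g) → ZMod p))

local notation "F" => ZMod p
local notation "V" => ((Fin g ⊕ Fin g) → ZMod p)
local notation "ι" => stdSymplForm g p

lemma sform_single_inr_left (x : V) (i : Fin g) :
    ι (Pi.single (Sum.inr i) 1) x = - x (Sum.inl i) := by
  rw [sform_anti, sform_single_inr]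

lemma sform_single_inl_left (x : V) (i : Fin g) :
    ι (Pi.single (Sum.inl i) 1) x = x (Sum.inr i) := by
  rw [sform_anti, sform_single_inl, neg_neg]

/-- The subspace of vectors supported on coordinates `≥ j`. -/
def Uj (j : ℕ) : Submodule F V where
  carrier := {x | ∀ i : Fin g, (i : ℕ) < j → x (Sum.inl i) = 0 ∧ x (Sum.inr i) = 0}
  zero_mem' := fun i _ => ⟨rfl, rfl⟩
  add_mem' := by
    intro a b ha hb i hi
    obtain ⟨h1, h2⟩ := ha i hi
    obtain ⟨h3, h4⟩ := hb i hi
    exact ⟨by simp [h1, h3], by simp [h2, h4]⟩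
  smul_mem' := by
    intro c a ha i hi
    obtain ⟨h1, h2⟩ := ha i hi
    exact ⟨by simp [h1], by simp [h2]⟩

lemma single_inl_mem_Uj {j : ℕ} {i : Fin g} (h : j ≤ (i : ℕ)) :
    (Pi.single (Sum.inl i) 1 : V) ∈ Uj g p j := by
  intro i' hi'
  constructor
  · rw [Pi.single_apply, if_neg]
    intro hc
    rw [Sum.inl.injEq] at hc
    subst hc
    omega
  · rw [Pi.single_apply, if_neg]
    simp
lemma single_inr_mem_Uj {j : ℕ} {i : Fin g} (h : j ≤ (i : ℕ)) :
    (Pi.single (Sum.inr i) 1 : V) ∈ Uj g p j := by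
  intro i' hi'
  constructor
  · rw [Pi.single_apply, if_neg]
    simp
  · rw [Pi.single_apply, if_neg]
    intro hc
    rw [Sum.inr.injEq] at hc
    subst hc
    omega

lemma Tv_fix {w : V} {z : V} (h : ι z w = 0) (t : F) : Tv g p w t z = z := by
  rw [Tv_apply, h, mul_zero, zero_smul, add_zero]

lemma Tv_move {x z : V} (h : ι x z ≠ 0) : Tv g p (z - x) (ι x z)⁻¹ x = z := by
  rw [Tv_apply, sform_sub_right, stdSymplForm_self, sub_zero, inv_mul_cancel₀ h, one_smul]
  abel

lemma Tv_preserves_Uj {j : ℕ} {w : V} (hw : w ∈ Uj g p j) (t : F) {z : V}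
    (hz : z ∈ Uj g p j) : Tv g p w t z ∈ Uj g p j := by
  rw [Tv_apply]
  exact (Uj g p j).add_mem hz ((Uj g p j).smul_mem _ hw)

/-- `h` fixes every vector orthogonal to `Uj j`. -/
def FixC (j : ℕ) (h : V ≃ₗ[F] V) : Prop :=
  ∀ z : V, (∀ w : V, w ∈ Uj g p j → ι z w = 0) → h z = z

lemma FixC_Tv {j : ℕ} {w : V} (hw : w ∈ Uj g p j) (t : F) : FixC g p j (Tv g p w t) :=
  fun z hz => Tv_fix g p (hz w hw) t

lemma FixC_mul {j : ℕ} {h₁ h₂ : V ≃ₗ[F] V} (H1 : FixC g p j h₁) (H2 : FixC g p j h₂) :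
    FixC g p j (h₁ * h₂) := by
  intro z hz
  show h₁ (h₂ z) = z
  rw [H2 z hz, H1 z hz]

lemma FixC_one (j : ℕ) : FixC g p j 1 := fun z _ => rfl

lemma exists_pairing_Uj {j : ℕ} {x : V} (hx : x ∈ Uj g p j) (hx0 : x ≠ 0) :
    ∃ z, z ∈ Uj g p j ∧ ι x z ≠ 0 := by
  have : ∃ k, x k ≠ 0 := by
    by_contra hc
    push_neg at hc
    exact hx0 (funext hc)
  obtain ⟨k, hk⟩ := this
  cases k with
  | inl i =>
    refine ⟨Pi.single (Sum.inr i) 1, single_inr_mem_Uj g p ?_, ?_⟩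
    · by_contra hc
      push_neg at hc
      exact hk (hx i hc).1
    · rw [sform_single_inr]
      exact hk
  | inr i =>
    refine ⟨Pi.single (Sum.inl i) 1, single_inl_mem_Uj g p ?_, ?_⟩
    · by_contra hc
      push_neg at hc
      exact hk (hx i hc).2
    · rw [sform_single_inl]
      simpa using hk

lemma exists_common_pairing_Uj {j : ℕ} {x y : V} (hx : x ∈ Uj g p j) (hy : y ∈ Uj g p j)
    (hx0 : x ≠ 0) (hy0 : y ≠ 0) :
    ∃ z, z ∈ Uj g p j ∧ ι x z ≠ 0 ∧ ι y z ≠ 0 := by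
  obtain ⟨z₁, hz₁U, hz₁⟩ := exists_pairing_Uj g p hx hx0
  obtain ⟨z₂, hz₂U, hz₂⟩ := exists_pairing_Uj g p hy hy0
  by_cases h1 : ι y z₁ ≠ 0
  · exact ⟨z₁, hz₁U, hz₁, h1⟩
  by_cases h2 : ι x z₂ ≠ 0
  · exact ⟨z₂, hz₂U, h2, hz₂⟩
  push_neg at h1 h2
  refine ⟨z₁ + z₂, (Uj g p j).add_mem hz₁U hz₂U, ?_, ?_⟩
  · rw [sform_add_right, h2, add_zero]
    exact hz₁
  · rw [sform_add_right, h1, zero_add]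
    exact hz₂

/-- Transvection-transitivity on nonzero vectors of `Uj j`. -/
lemma vec_transitive (hodd : Odd p) (hspan : Submodule.span F (Set.range e) = ⊤)
    (hpart : ¬ ∃ E₁ E₂ : Set ((Fin g ⊕ Fin g) → ZMod p),
      E₁.Nonempty ∧ E₂.Nonempty ∧ E₁ ∪ E₂ = Set.range e ∧ E₁ ∩ E₂ = ∅ ∧
      ∀ x ∈ E₁, ∀ y ∈ E₂, stdSymplForm g p x y = 0) {j : ℕ} {x a : V} (hx : x ∈ Uj g p j) (ha : a ∈ Uj g p j)
    (hx0 : x ≠ 0) (ha0 : a ≠ 0) :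
    ∃ h : V ≃ₗ[F] V, h ∈ Gg g p e ∧ h ∈ sp g p ∧ FixC g p j h ∧
      (∀ z ∈ Uj g p j, h z ∈ Uj g p j) ∧ h x = a := by
  by_cases hxa : ι x a ≠ 0
  · refine ⟨Tv g p (a - x) (ι x a)⁻¹, Tv_mem_Gg g p e hodd hspan hpart _ _,
      Tv_mem_sp g p _ _, FixC_Tv g p ((Uj g p j).sub_mem ha hx) _,
      fun z hz => Tv_preserves_Uj g p ((Uj g p j).sub_mem ha hx) _ hz, Tv_move g p hxa⟩
  push_neg at hxa
  obtain ⟨z, hzU, hxz, haz⟩ := exists_common_pairing_Uj g p hx ha hx0 ha0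
  have hza : ι z a ≠ 0 := by
    rw [sform_anti]
    simpa using haz
  refine ⟨Tv g p (a - z) (ι z a)⁻¹ * Tv g p (z - x) (ι x z)⁻¹,
    mul_mem (Tv_mem_Gg g p e hodd hspan hpart _ _) (Tv_mem_Gg g p e hodd hspan hpart _ _),
    mul_mem (Tv_mem_sp g p _ _) (Tv_mem_sp g p _ _),
    FixC_mul g p (FixC_Tv g p ((Uj g p j).sub_mem ha hzU) _)
      (FixC_Tv g p ((Uj g p j).sub_mem hzU hx) _),
    fun w hw => Tv_preserves_Uj g p ((Uj g p j).sub_mem ha hzU) _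
      (Tv_preserves_Uj g p ((Uj g p j).sub_mem hzU hx) _ hw), ?_⟩
  show Tv g p (a - z) (ι z a)⁻¹ (Tv g p (z - x) (ι x z)⁻¹ x) = a
  rw [Tv_move g p hxz, Tv_move g p hza]

/-- Transvection-transitivity on hyperbolic pairs in `Uj j`. -/
lemma pair_transitive (hodd : Odd p) (hspan : Submodule.span F (Set.range e) = ⊤)
    (hpart : ¬ ∃ E₁ E₂ : Set ((Fin g ⊕ Fin g) → ZMod p),
      E₁.Nonempty ∧ E₂.Nonempty ∧ E₁ ∪ E₂ = Set.range e ∧ E₁ ∩ E₂ = ∅ ∧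
      ∀ x ∈ E₁, ∀ y ∈ E₂, stdSymplForm g p x y = 0) {j : ℕ} (hj : j < g) {x y : V} (hx : x ∈ Uj g p j)
    (hy : y ∈ Uj g p j) (hxy : ι x y = 1) :
    ∃ h : V ≃ₗ[F] V, h ∈ Gg g p e ∧ h ∈ sp g p ∧ FixC g p j h ∧
      h x = Pi.single (Sum.inl (⟨j, hj⟩ : Fin g)) 1 ∧
      h y = Pi.single (Sum.inr (⟨j, hj⟩ : Fin g)) 1 := by
  haveI : Fact (1 < p) := ⟨(Fact.out : p.Prime).one_lt⟩
  set a : V := Pi.single (Sum.inl (⟨j, hj⟩ : Fin g)) 1 with hadef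
  set b : V := Pi.single (Sum.inr (⟨j, hj⟩ : Fin g)) 1 with hbdef
  have haU : a ∈ Uj g p j := single_inl_mem_Uj g p (le_refl j)
  have hbU : b ∈ Uj g p j := single_inr_mem_Uj g p (le_refl j)
  have hab : ι a b = 1 := by
    rw [hadef, hbdef, sform_single_inr, Pi.single_apply, if_pos rfl]
  have hx0 : x ≠ 0 := by
    intro hc
    rw [hc, sform_zero_left] at hxy
    exact one_ne_zero hxy.symm
  have ha0 : a ≠ 0 := by
    intro hc
    rw [hc, sform_zero_left] at hab
    exact one_ne_zero hab.symm
  obtain ⟨h₁, h₁G, h₁sp, h₁fix, h₁pres, h₁x⟩ :=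
    vec_transitive g p e hodd hspan hpart hx haU hx0 ha0
  set y₁ := h₁ y with hy₁def
  have hy₁U : y₁ ∈ Uj g p j := h₁pres y hy
  have hay₁ : ι a y₁ = 1 := by
    rw [← h₁x, hy₁def, h₁sp x y, hxy]
  by_cases hyb : ι y₁ b ≠ 0
  · -- one step
    have hfixa : ι a (b - y₁) = 0 := by
      rw [sform_sub_right, hab, hay₁, sub_self]
    refine ⟨Tv g p (b - y₁) (ι y₁ b)⁻¹ * h₁,
      mul_mem (Tv_mem_Gg g p e hodd hspan hpart _ _) h₁G,
      mul_mem (Tv_mem_sp g p _ _) h₁sp,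
      FixC_mul g p (FixC_Tv g p ((Uj g p j).sub_mem hbU hy₁U) _) h₁fix, ?_, ?_⟩
    · show Tv g p (b - y₁) (ι y₁ b)⁻¹ (h₁ x) = a
      rw [h₁x, Tv_fix g p hfixa]
    · show Tv g p (b - y₁) (ι y₁ b)⁻¹ (h₁ y) = b
      rw [← hy₁def, Tv_move g p hyb]
  · push_neg at hyb
    -- two steps through y'' = a + y₁
    have hstep1 : Tv g p a (-1) y₁ = a + y₁ := by
      rw [Tv_apply]
      have : ι y₁ a = -1 := by
        rw [sform_anti, hay₁]
      rw [this]
      have h2 : (-1 : F) * -1 = 1 := by ring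
      rw [h2, one_smul]
      abel
    have hstep1a : Tv g p a (-1) a = a := Tv_fix g p (stdSymplForm_self g p a) _
    have hy''b : ι (a + y₁) b ≠ 0 := by
      rw [stdSymplForm_add_left, hab, hyb, add_zero]
      exact one_ne_zero
    have hfixa2 : ι a (b - (a + y₁)) = 0 := by
      rw [sform_sub_right, sform_add_right, hab, stdSymplForm_self, hay₁]
      ring
    have hy''U : a + y₁ ∈ Uj g p j := (Uj g p j).add_mem haU hy₁U
    refine ⟨Tv g p (b - (a + y₁)) (ι (a + y₁) b)⁻¹ * Tv g p a (-1) * h₁,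
      mul_mem (mul_mem (Tv_mem_Gg g p e hodd hspan hpart _ _)
        (Tv_mem_Gg g p e hodd hspan hpart _ _)) h₁G,
      mul_mem (mul_mem (Tv_mem_sp g p _ _) (Tv_mem_sp g p _ _)) h₁sp,
      FixC_mul g p (FixC_mul g p (FixC_Tv g p ((Uj g p j).sub_mem hbU hy''U) _)
        (FixC_Tv g p haU _)) h₁fix, ?_, ?_⟩
    · show Tv g p (b - (a + y₁)) (ι (a + y₁) b)⁻¹ (Tv g p a (-1) (h₁ x)) = a
      rw [h₁x, hstep1a, Tv_fix g p hfixa2]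
    · show Tv g p (b - (a + y₁)) (ι (a + y₁) b)⁻¹ (Tv g p a (-1) (h₁ y)) = b
      rw [← hy₁def, hstep1, Tv_move g p hy''b]

lemma single_perp_Uj {j : ℕ} {i : Fin g} (hi : (i : ℕ) < j) :
    (∀ w : V, w ∈ Uj g p j → ι (Pi.single (Sum.inl i) 1) w = 0) ∧
    (∀ w : V, w ∈ Uj g p j → ι (Pi.single (Sum.inr i) 1) w = 0) := by
  constructor
  · intro w hw
    rw [sform_single_inl_left]
    exact (hw i hi).2
  · intro w hw
    rw [sform_single_inr_left, (hw i hi).1, neg_zero]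

lemma sp_fix_induction (hodd : Odd p) (hspan : Submodule.span F (Set.range e) = ⊤)
    (hpart : ¬ ∃ E₁ E₂ : Set ((Fin g ⊕ Fin g) → ZMod p),
      E₁.Nonempty ∧ E₂.Nonempty ∧ E₁ ∪ E₂ = Set.range e ∧ E₁ ∩ E₂ = ∅ ∧
      ∀ x ∈ E₁, ∀ y ∈ E₂, stdSymplForm g p x y = 0) (hg : 1 ≤ g) :
    ∀ m : ℕ, ∀ f : V ≃ₗ[F] V, f ∈ sp g p →
      (∀ i : Fin g, (i : ℕ) < g - m →
        f (Pi.single (Sum.inl i) 1) = Pi.single (Sum.inl i) 1 ∧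
        f (Pi.single (Sum.inr i) 1) = Pi.single (Sum.inr i) 1) →
      f ∈ Gg g p e := by
  intro m
  induction m with
  | zero =>
    intro f _ hfix
    have hf1 : f = 1 := by
      apply LinearEquiv.toLinearMap_injective
      apply Module.Basis.ext (Pi.basisFun F (Fin g ⊕ Fin g))
      intro k
      rw [Pi.basisFun_apply]
      cases k with
      | inl i =>
        simpa using (hfix i (by omega)).1
      | inr i =>
        simpa using (hfix i (by omega)).2
    rw [hf1]
    exact one_mem _
  | succ m ih =>
    intro f hf hfix
    set j := g - (m + 1) with hjdef
    have hj : j < g := by omega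
    set a : V := Pi.single (Sum.inl (⟨j, hj⟩ : Fin g)) 1 with hadef
    set b : V := Pi.single (Sum.inr (⟨j, hj⟩ : Fin g)) 1 with hbdef
    set x := f a with hxdef
    set y := f b with hydef
    have hxy : ι x y = 1 := by
      rw [hxdef, hydef, hf, hadef, hbdef, sform_single_inr, Pi.single_apply, if_pos rfl]
    -- x and y lie in Uj j
    have hcoord : ∀ z : V, (∀ i : Fin g, (i : ℕ) < j → ι z (Pi.single (Sum.inl i) 1) = 0 ∧
        ι z (Pi.single (Sum.inr i) 1) = 0) → z ∈ Uj g p j := by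
      intro z hz i hi
      obtain ⟨h1, h2⟩ := hz i hi
      rw [sform_single_inl, neg_eq_zero] at h1
      rw [sform_single_inr] at h2
      exact ⟨h2, h1⟩
    have hmemU : ∀ z : V, (z = a ∨ z = b) → f z ∈ Uj g p j := by
      intro z hzab
      apply hcoord
      intro i hi
      have hfixi := hfix i hi
      constructor
      · rw [← hfixi.1, hf]
        rcases hzab with rfl | rfl
        · rw [sform_single_inl, hadef]
          simp [Pi.single_apply]
        · rw [sform_single_inl, hbdef]
          simp only [Pi.single_apply]
          rw [if_neg, neg_zero]
          simp only [Sum.inr.injEq]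
          intro hc
          subst hc
          simp at hi
      · rw [← hfixi.2, hf]
        rcases hzab with rfl | rfl
        · rw [sform_single_inr, hadef]
          simp only [Pi.single_apply]
          rw [if_neg]
          simp only [Sum.inl.injEq]
          intro hc
          subst hc
          simp at hi
        · rw [sform_single_inr, hbdef]
          simp [Pi.single_apply]
    have hxU : x ∈ Uj g p j := hmemU a (Or.inl rfl)
    have hyU : y ∈ Uj g p j := hmemU b (Or.inr rfl)
    obtain ⟨h, hG, hsp', hfixh, hhx, hhy⟩ :=
      pair_transitive g p e hodd hspan hpart hj hxU hyU hxy
    have hnew : ∀ i : Fin g, (i : ℕ) < g - m →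
        (h * f) (Pi.single (Sum.inl i) 1) = Pi.single (Sum.inl i) 1 ∧
        (h * f) (Pi.single (Sum.inr i) 1) = Pi.single (Sum.inr i) 1 := by
      intro i hi
      by_cases hij : (i : ℕ) < j
      · obtain ⟨h1, h2⟩ := hfix i hij
        obtain ⟨hp1, hp2⟩ := single_perp_Uj g p hij
        constructor
        · show h (f _) = _
          rw [h1, hfixh _ hp1]
        · show h (f _) = _
          rw [h2, hfixh _ hp2]
      · have hieq : (i : ℕ) = j := by omega
        have hieq' : i = (⟨j, hj⟩ : Fin g) := Fin.ext hieq
        subst hieq'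
        constructor
        · show h (f a) = a
          rw [← hxdef, hhx, hadef]
        · show h (f b) = b
          rw [← hydef, hhy, hbdef]
    have hmf : h * f ∈ Gg g p e := ih (h * f) (mul_mem hsp' hf) hnew
    have : f = h⁻¹ * (h * f) := by group
    rw [this]
    exact mul_mem (inv_mem hG) hmf

lemma sp_le_Gg (hodd : Odd p) (hspan : Submodule.span F (Set.range e) = ⊤)
    (hpart : ¬ ∃ E₁ E₂ : Set ((Fin g ⊕ Fin g) → ZMod p),
      E₁.Nonempty ∧ E₂.Nonempty ∧ E₁ ∪ E₂ = Set.range e ∧ E₁ ∩ E₂ = ∅ ∧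
      ∀ x ∈ E₁, ∀ y ∈ E₂, stdSymplForm g p x y = 0) (hg : 1 ≤ g) : ∀ f ∈ sp g p, f ∈ Gg g p e := by
  intro f hf
  exact sp_fix_induction g p e hodd hspan hpart hg g f hf (fun i hi => by omega)

end Aux4
theorem generated_by_transvections_eq_symplectic_group
    (p g : ℕ) (hp : p.Prime) (hodd : Odd p) (hg : 1 ≤ g)
    (e : Fin (2 * g) → (Fin g ⊕ Fin g) → ZMod p)
    (hspan : Submodule.span (ZMod p) (Set.range e) = ⊤)
    (hpart : ¬ ∃ E₁ E₂ : Set ((Fin g ⊕ Fin g) → ZMod p),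
      E₁.Nonempty ∧ E₂.Nonempty ∧ E₁ ∪ E₂ = Set.range e ∧ E₁ ∩ E₂ = ∅ ∧
      ∀ x ∈ E₁, ∀ y ∈ E₂, stdSymplForm g p x y = 0) :
    (Subgroup.closure (Set.range fun i => transvectionEquiv g p (e i)) :
        Set (((Fin g ⊕ Fin g) → ZMod p) ≃ₗ[ZMod p] ((Fin g ⊕ Fin g) → ZMod p))) =
      {f : ((Fin g ⊕ Fin g) → ZMod p) ≃ₗ[ZMod p] ((Fin g ⊕ Fin g) → ZMod p) |
        ∀ x y, stdSymplForm g p (f x) (f y) = stdSymplForm g p x y} := by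
  haveI : Fact p.Prime := ⟨hp⟩
  ext f
  simp only [SetLike.mem_coe, Set.mem_setOf_eq]
  constructor
  · intro hf x y
    exact Gg_le_sp g p e hf x y
  · intro hf
    exact sp_le_Gg g p e hodd hspan hpart hg f hf
end

section
/- Let p be an odd prime, let g ≥ 1, and let e_1, …, e_{2g} be vectors spanning V = F_p^{2g} such that there is no partition of the set E = {e_1, …, e_{2g}} into two nonempty subsets E_1 and E_2 with ι(e, f) = 0 for all e ∈ E_1 and f ∈ E_2. Then the group G generated by the transvections T_{e_1}, …, T_{e_{2g}} acts irreducibly on V: the only linear subspaces W ⊆ V invariant under every T_{e_i} are W = 0 and W = V. -/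
lemma stdSymplForm_add_right (g p : ℕ) (β x y : (Fin g ⊕ Fin g) → ZMod p) :
    stdSymplForm g p β (x + y) = stdSymplForm g p β x + stdSymplForm g p β y := by
  simp only [stdSymplForm, Pi.add_apply]
  rw [← Finset.sum_add_distrib]
  exact Finset.sum_congr rfl fun i _ => by ring

lemma stdSymplForm_smul_right (g p : ℕ) (c : ZMod p) (β x : (Fin g ⊕ Fin g) → ZMod p) :
    stdSymplForm g p β (c • x) = c * stdSymplForm g p β x := by
  simp only [stdSymplForm, Pi.smul_apply, smul_eq_mul]
  rw [Finset.mul_sum]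
  exact Finset.sum_congr rfl fun i _ => by ring

/-- The form as a linear map in its second variable. -/
def stdSymplFormR (g p : ℕ) (β : (Fin g ⊕ Fin g) → ZMod p) :
    ((Fin g ⊕ Fin g) → ZMod p) →ₗ[ZMod p] ZMod p where
  toFun x := stdSymplForm g p β x
  map_add' x y := stdSymplForm_add_right g p β x y
  map_smul' c x := stdSymplForm_smul_right g p c β x

lemma stdSymplForm_single_inr (g p : ℕ) (w : (Fin g ⊕ Fin g) → ZMod p) (i : Fin g) :
    stdSymplForm g p w (Pi.single (Sum.inr i) 1) = w (Sum.inl i) := by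
  simp only [stdSymplForm, Pi.single_apply]
  rw [Finset.sum_eq_single i]
  · simp
  · intro j _ hj
    simp [hj, Ne.symm hj]
  · simp

lemma stdSymplForm_single_inl (g p : ℕ) (w : (Fin g ⊕ Fin g) → ZMod p) (i : Fin g) :
    stdSymplForm g p w (Pi.single (Sum.inl i) 1) = - w (Sum.inr i) := by
  simp only [stdSymplForm, Pi.single_apply]
  rw [Finset.sum_eq_single i]
  · simp
  · intro j _ hj
    simp [hj, Ne.symm hj]
  · simp

lemma stdSymplForm_nondeg (g p : ℕ) [NeZero p] (w : (Fin g ⊕ Fin g) → ZMod p)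
    (h : ∀ y, stdSymplForm g p w y = 0) : w = 0 := by
  funext a
  cases a with
  | inl i =>
    have := h (Pi.single (Sum.inr i) 1)
    rw [stdSymplForm_single_inr] at this
    simpa using this
  | inr i =>
    have := h (Pi.single (Sum.inl i) 1)
    rw [stdSymplForm_single_inl] at this
    simpa [neg_eq_zero] using this

theorem transvection_group_acts_irreducibly
    (p g : ℕ) (hp : p.Prime) (hodd : Odd p) (hg : 1 ≤ g)
    (e : Fin (2 * g) → (Fin g ⊕ Fin g) → ZMod p)
    (hspan : Submodule.span (ZMod p) (Set.range e) = ⊤)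
    (hpart : ¬ ∃ E₁ E₂ : Set ((Fin g ⊕ Fin g) → ZMod p),
      E₁.Nonempty ∧ E₂.Nonempty ∧ E₁ ∪ E₂ = Set.range e ∧ E₁ ∩ E₂ = ∅ ∧
      ∀ x ∈ E₁, ∀ y ∈ E₂, stdSymplForm g p x y = 0) :
    ∀ W : Submodule (ZMod p) ((Fin g ⊕ Fin g) → ZMod p),
      (∀ (i : Fin (2 * g)), ∀ x ∈ W, transvection g p (e i) x ∈ W) →
      W = ⊥ ∨ W = ⊤ := by
  intro W hW
  haveI : Fact p.Prime := ⟨hp⟩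
  by_cases hbot : W = ⊥
  · exact Or.inl hbot
  right
  -- key dichotomy
  have key : ∀ i : Fin (2 * g), (∀ x ∈ W, stdSymplForm g p x (e i) = 0) ∨ e i ∈ W := by
    intro i
    by_cases h : ∀ x ∈ W, stdSymplForm g p x (e i) = 0
    · exact Or.inl h
    right
    push_neg at h
    obtain ⟨x, hx, hne⟩ := h
    have h1 : x + stdSymplForm g p x (e i) • e i ∈ W := by
      have := hW i x hx
      simpa [transvection, stdSymplFormL, LinearMap.smulRight] using this
    have h2 : stdSymplForm g p x (e i) • e i ∈ W := by
      have := W.sub_mem h1 hx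
      simpa using this
    have h3 := W.smul_mem (stdSymplForm g p x (e i))⁻¹ h2
    rwa [smul_smul, inv_mul_cancel₀ hne, one_smul] at h3
  by_cases hall : ∀ i, e i ∈ W
  · rw [eq_top_iff, ← hspan, Submodule.span_le]
    rintro _ ⟨i, rfl⟩
    exact hall i
  exfalso
  push_neg at hall
  obtain ⟨j, hj⟩ := hall
  -- E₁ nonempty : some e i ∈ W
  have hE1 : ∃ i, e i ∈ W := by
    by_contra hno
    push_neg at hno
    obtain ⟨w, hwW, hw0⟩ := (Submodule.ne_bot_iff W).mp hbot
    have horth : ∀ y, stdSymplForm g p w y = 0 := by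
      have hker : Submodule.span (ZMod p) (Set.range e) ≤
          LinearMap.ker (stdSymplFormR g p w) := by
        rw [Submodule.span_le]
        rintro _ ⟨i, rfl⟩
        have := (key i).resolve_right (hno i) w hwW
        simpa [stdSymplFormR, LinearMap.mem_ker] using this
      intro y
      have : y ∈ LinearMap.ker (stdSymplFormR g p w) := by
        apply hker
        rw [hspan]; trivial
      simpa [stdSymplFormR, LinearMap.mem_ker] using this
    exact hw0 (stdSymplForm_nondeg g p w horth)
  obtain ⟨i0, hi0⟩ := hE1
  apply hpart
  refine ⟨Set.range e ∩ (W : Set _), Set.range e \ (W : Set _),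
    ⟨e i0, ⟨i0, rfl⟩, hi0⟩, ⟨e j, ⟨j, rfl⟩, hj⟩, ?_, ?_, ?_⟩
  · rw [Set.inter_union_diff]
  · ext v
    simp only [Set.mem_inter_iff, Set.mem_diff, Set.mem_empty_iff_false, iff_false]
    rintro ⟨⟨-, hv⟩, -, hv'⟩
    exact hv' hv
  · rintro x ⟨-, hxW⟩ y ⟨⟨k, rfl⟩, hyW⟩
    exact (key k).resolve_right hyW x hxW
end
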